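/- arXiv:2205.09923 — 2 statements merged into one kernel-verified Lean document; each statement's English description precedes it below -/
import Mathlib

section
/- Consider the scalar recursion v_{k+1} = θ p̄ + (1−θ)(a² v_k + q) with a > 1, p̄ > 0, q > 0, θ ∈ [0,1], and v_0 ≥ 0. The sequence (v_k) is bounded if and only if θ > 1 − 1/a². -/
theorem stmt_4 (a pbar q θ : ℝ) (ha : 1 < a) (hp : 0 < pbar) (hq : 0 < q)
    (hθ0 : 0 ≤ θ) (hθ1 : θ ≤ 1)
    (v : ℕ → ℝ) (h0 : 0 ≤ v 0)
    (hrec : ∀ k, v (k + 1) = θ * pbar + (1 - θ) * (a ^ 2 * v k + q)) :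
    (∃ C : ℝ, ∀ k, v k ≤ C) ↔ θ > 1 - 1 / a ^ 2 := by
  have ha2 : (1:ℝ) < a ^ 2 := by nlinarith
  have ha2pos : (0:ℝ) < a ^ 2 := by linarith
  set r : ℝ := (1 - θ) * a ^ 2 with hr
  have hrnn : 0 ≤ r := mul_nonneg (by linarith) ha2pos.le
  set c : ℝ := θ * pbar + (1 - θ) * q with hc
  have hcpos : 0 < c := by
    rcases le_or_gt pbar q with h | h
    · nlinarith
    · nlinarith
  have hrec' : ∀ k, v (k + 1) = r * v k + c := by
    intro k; rw [hrec k]; ring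
  have hvnn : ∀ k, 0 ≤ v k := by
    intro k
    induction k with
    | zero => exact h0
    | succ n ih =>
      rw [hrec' n]
      have := mul_nonneg hrnn ih
      linarith
  have hiff : (θ > 1 - 1 / a ^ 2) ↔ r < 1 := by
    rw [hr]
    rw [gt_iff_lt, sub_lt_comm, lt_div_iff₀ ha2pos]
  rw [hiff]
  constructor
  · rintro ⟨C, hC⟩
    by_contra hnot
    push_neg at hnot
    have hgrow : ∀ k, v 0 + k * c ≤ v k := by
      intro k
      induction k with
      | zero => simp
      | succ n ih =>
        rw [hrec' n]
        have h1 : v n ≤ r * v n := by nlinarith [hvnn n]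
        push_cast
        nlinarith
    obtain ⟨k, hk⟩ := exists_nat_gt ((C - v 0) / c)
    have := hgrow k
    have hk' : (C - v 0) / c < k := hk
    rw [div_lt_iff₀ hcpos] at hk'
    have := hC k
    linarith
  · intro hr1
    refine ⟨max (v 0) (c / (1 - r)), ?_⟩
    intro k
    induction k with
    | zero => exact le_max_left _ _
    | succ n ih =>
      rw [hrec' n]
      have hC2 : c / (1 - r) ≤ max (v 0) (c / (1 - r)) := le_max_right _ _
      have h1r : 0 < 1 - r := by linarith
      rw [div_le_iff₀ h1r] at hC2
      have : r * v n ≤ r * max (v 0) (c / (1 - r)) :=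
        mul_le_mul_of_nonneg_left ih hrnn
      nlinarith
end

section
/- Suppose E[P_{k+1}] = θ(k) P̄ + (1−θ(k)) h(E[P_k]) with θ(k) ≥ θ' > θ_c = 1 − 1/ρ(A)² for all k ≥ K, for some finite K, and E[P_K] is a fixed positive semidefinite matrix. Then sup_k tr(E[P_k]) < ∞. -/
/-!
For `k ≥ K` put `τ := max (1 - θ') 0`, so that `τ ρ(A)² < 1`. Since `0 ≤ θ k ≤ 1` and
`1 - θ k ≤ τ`, in the Loewner order `P_{k+1} ≤ (P̄ + Q) + τ A P_k Aᵀ`, and `X ↦ τ A X Aᵀ` is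
monotone. Unrolling, `P_{K+i} ≤ ∑_{l<i} τ^l A^l (P̄ + Q) (A^l)ᵀ + τ^i A^i P_K (A^i)ᵀ`, whose trace
is at most `(tr (P̄ + Q) + tr P_K) ∑_l τ^l ‖A^l‖²` (Frobenius norm). By Gelfand's formula
`‖A^l‖ ≤ s^l` eventually for every `s > ρ(A)`; taking `τ s² < 1` makes this series converge.
-/

open Matrix Filter Topology

section GelfandFormula

variable {A : Type*} [NormedRing A] [NormedAlgebra ℂ A] [CompleteSpace A]

theorem spectrum.spectralRadius_ne_top (a : A) : spectralRadius ℂ a ≠ ⊤ := by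
  refine ((spectralRadius_le_pow_nnnorm_pow_one_div ℂ a 0).trans_lt ?_).ne
  simp [ENNReal.mul_lt_top]

theorem spectrum.eventually_norm_pow_le_pow (a : A) {r : ℝ}
    (hr : (spectralRadius ℂ a).toReal < r) : ∀ᶠ n in atTop, ‖a ^ n‖ ≤ r ^ n := by
  have hr0 : 0 < r := ENNReal.toReal_nonneg.trans_lt hr
  have hρ : spectralRadius ℂ a < ENNReal.ofReal r :=
    (ENNReal.lt_ofReal_iff_toReal_lt (spectralRadius_ne_top a)).2 hr
  filter_upwards [(pow_norm_pow_one_div_tendsto_nhds_spectralRadius a).eventually_lt_const hρ,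
    eventually_ge_atTop 1] with n hn hn1
  rw [ENNReal.ofReal_lt_ofReal_iff hr0, one_div,
    Real.rpow_inv_lt_iff_of_pos (norm_nonneg _) hr0.le (by positivity), Real.rpow_natCast] at hn
  exact hn.le

end GelfandFormula

theorem le_sum_iterate_add_iterate {α : Type*} [AddCommMonoid α] [PartialOrder α]
    [IsOrderedAddMonoid α] {T : α →+ α} (hT : Monotone T) {r : α} {x : ℕ → α}
    (h : ∀ i, x (i + 1) ≤ r + T (x i)) (i : ℕ) :
    x i ≤ ∑ l ∈ Finset.range i, T^[l] r + T^[i] (x 0) := by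
  induction i with
  | zero => simp
  | succ i ih =>
    calc x (i + 1) ≤ r + T (x i) := h i
    _ ≤ r + T (∑ l ∈ Finset.range i, T^[l] r + T^[i] (x 0)) := add_le_add_right (hT ih) r
    _ = ∑ l ∈ Finset.range (i + 1), T^[l] r + T^[i + 1] (x 0) := by
      simp only [map_add, map_sum, Finset.sum_range_succ', Function.iterate_succ_apply',
        Function.iterate_zero_apply]
      abel

namespace Matrix

open scoped Matrix.Norms.Frobenius MatrixOrder

variable {m n : Type*} [Fintype m] [Fintype n]

theorem trace_transpose_mul_self_eq_frobenius_norm_sq (N : Matrix m n ℝ) :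
    (Nᵀ * N).trace = ‖N‖ ^ 2 := by
  rw [frobenius_norm_def, ← Real.sqrt_eq_rpow, Real.sq_sqrt (by positivity), Finset.sum_comm]
  simp [trace, mul_apply, sq]

theorem PosSemidef.trace_mul_mul_transpose_le {X : Matrix n n ℝ} (hX : X.PosSemidef)
    (M : Matrix m n ℝ) : (M * X * Mᵀ).trace ≤ ‖M‖ ^ 2 * X.trace := by
  classical
  obtain ⟨B, rfl⟩ : ∃ B : Matrix n n ℝ, X = Bᵀ * B :=
    CStarAlgebra.nonneg_iff_eq_star_mul_self.mp hX.nonneg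
  have hMB : M * (Bᵀ * B) * Mᵀ = (B * Mᵀ)ᵀ * (B * Mᵀ) := by
    simp only [transpose_mul, transpose_transpose, Matrix.mul_assoc]
  rw [hMB, trace_transpose_mul_self_eq_frobenius_norm_sq,
    trace_transpose_mul_self_eq_frobenius_norm_sq, ← frobenius_norm_transpose M, ← mul_pow,
    mul_comm]
  gcongr
  exact frobenius_norm_mul _ _

theorem PosSemidef.mul_mul_transpose_same {X : Matrix n n ℝ} (hX : X.PosSemidef)
    (M : Matrix m n ℝ) : (M * X * Mᵀ).PosSemidef := by
  simpa only [conjTranspose_eq_transpose_of_trivial] using hX.mul_mul_conjTranspose_same M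

open scoped ComplexOrder in
theorem trace_mono {𝕜 : Type*} [RCLike 𝕜] {X Y : Matrix n n 𝕜} (h : X ≤ Y) :
    X.trace ≤ Y.trace := by
  simpa [trace_sub] using (le_iff.mp h).trace_nonneg

variable [DecidableEq n]

theorem summable_pow_mul_frobenius_norm_pow_sq (A : Matrix n n ℝ) {τ : ℝ} (hτ0 : 0 ≤ τ)
    (hτ : τ * (spectralRadius ℂ (A.map Complex.ofReal)).toReal ^ 2 < 1) :
    Summable fun l => τ ^ l * ‖A ^ l‖ ^ 2 := by
  set r := (spectralRadius ℂ (A.map Complex.ofReal)).toReal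
  obtain ⟨s, hτs, hrs⟩ : ∃ s, τ * s ^ 2 < 1 ∧ r < s :=
    (((by fun_prop : Continuous fun s : ℝ => τ * s ^ 2).continuousAt.eventually_lt
      continuousAt_const hτ).filter_mono nhdsWithin_le_nhds |>.and
      (self_mem_nhdsWithin (s := Set.Ioi r))).exists
  have : CompleteSpace (Matrix n n ℂ) := FiniteDimensional.complete ℂ _
  refine (summable_geometric_of_lt_one (by positivity) hτs).of_norm_bounded_eventually_nat ?_
  filter_upwards [spectrum.eventually_norm_pow_le_pow _ hrs] with l hl
  have hnorm : ‖A ^ l‖ = ‖A.map Complex.ofReal ^ l‖ := by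
    rw [← frobenius_norm_map_eq (A ^ l) _ Complex.norm_real]
    exact congrArg norm (Matrix.map_pow A Complex.ofRealHom l)
  rw [Real.norm_of_nonneg (by positivity), hnorm, mul_pow, ← pow_mul, pow_mul']
  gcongr

def scaledCongr (τ : ℝ) (A : Matrix n n ℝ) : Matrix n n ℝ →+ Matrix n n ℝ where
  toFun X := τ • (A * X * Aᵀ)
  map_zero' := by simp
  map_add' X Y := by simp only [Matrix.mul_add, Matrix.add_mul, smul_add]

@[simp]
theorem scaledCongr_apply (τ : ℝ) (A X : Matrix n n ℝ) :
    scaledCongr τ A X = τ • (A * X * Aᵀ) :=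
  rfl

theorem scaledCongr_iterate (τ : ℝ) (A X : Matrix n n ℝ) (l : ℕ) :
    (scaledCongr τ A)^[l] X = τ ^ l • (A ^ l * X * (A ^ l)ᵀ) := by
  induction l with
  | zero => simp
  | succ l ih =>
    rw [Function.iterate_succ_apply', ih, scaledCongr_apply, pow_succ', pow_succ', transpose_mul]
    simp only [Matrix.mul_smul, Matrix.smul_mul, smul_smul, Matrix.mul_assoc]

theorem scaledCongr_monotone {τ : ℝ} (hτ : 0 ≤ τ) (A : Matrix n n ℝ) :
    Monotone (scaledCongr τ A) := by
  intro X Y hXY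
  rw [le_iff, ← map_sub]
  exact ((le_iff.mp hXY).mul_mul_transpose_same A).smul hτ

theorem PosSemidef.trace_scaledCongr_iterate_le {τ : ℝ} (hτ : 0 ≤ τ) (A : Matrix n n ℝ)
    {X : Matrix n n ℝ} (hX : X.PosSemidef) (l : ℕ) :
    ((scaledCongr τ A)^[l] X).trace ≤ τ ^ l * ‖A ^ l‖ ^ 2 * X.trace := by
  rw [scaledCongr_iterate, trace_smul, smul_eq_mul, mul_assoc (τ ^ l)]
  exact mul_le_mul_of_nonneg_left (hX.trace_mul_mul_transpose_le _) (by positivity)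

theorem smul_add_one_sub_smul_le_add_scaledCongr {R Q X : Matrix n n ℝ} (hR : R.PosSemidef)
    (hQ : Q.PosSemidef) (hX : X.PosSemidef) (A : Matrix n n ℝ) {θ τ : ℝ} (hθ0 : 0 ≤ θ)
    (hθ1 : θ ≤ 1) (hτ : 1 - θ ≤ τ) :
    θ • R + (1 - θ) • (A * X * Aᵀ + Q) ≤ R + Q + scaledCongr τ A X := by
  have hdiff : R + Q + scaledCongr τ A X - (θ • R + (1 - θ) • (A * X * Aᵀ + Q))
      = (1 - θ) • R + θ • Q + (τ - (1 - θ)) • (A * X * Aᵀ) := by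
    rw [scaledCongr_apply]
    module
  rw [le_iff, hdiff]
  exact ((hR.smul (by linarith)).add (hQ.smul hθ0)).add
    ((hX.mul_mul_transpose_same A).smul (by linarith))

theorem exists_trace_le_of_le_add_scaledCongr (A R : Matrix n n ℝ) (hR : R.PosSemidef)
    {τ : ℝ} (hτ0 : 0 ≤ τ) (hτ : τ * (spectralRadius ℂ (A.map Complex.ofReal)).toReal ^ 2 < 1)
    {X : ℕ → Matrix n n ℝ} (hX : (X 0).PosSemidef)
    (hle : ∀ i, X (i + 1) ≤ R + scaledCongr τ A (X i)) :
    ∃ C, ∀ i, (X i).trace ≤ C := by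
  set w : ℕ → ℝ := fun l => τ ^ l * ‖A ^ l‖ ^ 2
  have hw : Summable w := summable_pow_mul_frobenius_norm_pow_sq A hτ0 hτ
  have hw0 : ∀ l, 0 ≤ w l := fun l => by positivity
  refine ⟨(R.trace + (X 0).trace) * ∑' l, w l, fun i => ?_⟩
  calc (X i).trace
      ≤ ∑ l ∈ Finset.range i, ((scaledCongr τ A)^[l] R).trace
        + ((scaledCongr τ A)^[i] (X 0)).trace := by
        rw [← trace_sum, ← trace_add]
        exact trace_mono (le_sum_iterate_add_iterate (scaledCongr_monotone hτ0 A) hle i)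
    _ ≤ ∑ l ∈ Finset.range i, w l * R.trace + w i * (X 0).trace := by
        gcongr with l
        · exact hR.trace_scaledCongr_iterate_le hτ0 A l
        · exact hX.trace_scaledCongr_iterate_le hτ0 A i
    _ ≤ (∑' l, w l) * R.trace + (∑' l, w l) * (X 0).trace := by
        rw [← Finset.sum_mul]
        gcongr
        exacts [hR.trace_nonneg, hw.sum_le_tsum _ fun l _ => hw0 l, hX.trace_nonneg,
          hw.le_tsum i fun l _ => hw0 l]
    _ = (R.trace + (X 0).trace) * ∑' l, w l := by ring

end Matrix

/-- If from time `K` on the reception probability satisfies `θ(k) ≥ θ' > θ_c = 1 − 1/ρ(A)²`,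
then the expected error covariance recursion stays trace-bounded. -/
theorem stmt_16 {n : ℕ} (A Q Pbar : Matrix (Fin n) (Fin n) ℝ)
    (hQ : Q.PosSemidef) (hPbar : Pbar.PosSemidef)
    (θ : ℕ → ℝ) (hθ01 : ∀ k, 0 ≤ θ k ∧ θ k ≤ 1)
    (θ' : ℝ) (K : ℕ)
    (hθ' : ∀ k ≥ K, θ' ≤ θ k)
    (hstab : θ' > 1 - 1 / ((spectralRadius ℂ (A.map Complex.ofReal)).toReal) ^ 2)
    (EP : ℕ → Matrix (Fin n) (Fin n) ℝ)
    (hpsd : ∀ k, (EP k).PosSemidef)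
    (hrec : ∀ k ≥ K, EP (k + 1) = θ k • Pbar + (1 - θ k) • (A * EP k * Aᵀ + Q)) :
    ∃ C : ℝ, ∀ k, (EP k).trace ≤ C := by
  set r := (spectralRadius ℂ (A.map Complex.ofReal)).toReal
  set τ := max (1 - θ') 0
  have hτ : τ * r ^ 2 < 1 := by
    rcases (sq_nonneg r).eq_or_lt with hr | hr
    · simp [← hr]
    · rw [max_mul_of_nonneg _ _ hr.le, zero_mul, max_lt_iff, ← lt_div_iff₀ hr]
      exact ⟨by linarith, one_pos⟩
  obtain ⟨C, hC⟩ := exists_trace_le_of_le_add_scaledCongr A (Pbar + Q) (hPbar.add hQ)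
    (le_max_right _ _) hτ (X := fun i => EP (K + i)) (hpsd K) fun i => by
      have hk : K ≤ K + i := Nat.le_add_right K i
      rw [← add_assoc, hrec (K + i) hk]
      exact smul_add_one_sub_smul_le_add_scaledCongr hPbar hQ (hpsd _) A (hθ01 _).1 (hθ01 _).2
        ((sub_le_sub_left (hθ' _ hk) 1).trans (le_max_left _ _))
  have hev : ∀ᶠ k in atTop, (EP k).trace ≤ C := eventually_atTop.2 ⟨K, fun k hk => by
    obtain ⟨i, rfl⟩ := Nat.exists_eq_add_of_le hk
    exact hC i⟩
  obtain ⟨C', hC'⟩ := (isBoundedUnder_of_eventually_le hev).bddAbove_range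
  exact ⟨C', fun k => hC' ⟨k, rfl⟩⟩
end
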